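/- (Most reliable path is solved by the generalized Bellman–Ford algorithm with ⊕ = max, ⊗ = ×.) For every natural number t and all vertices u, v : V, the (max, ×) Bellman–Ford iterate equals the supremum over all walks of length at most t of the product of edge probabilities along the walk: R_t u v = ⨆_{k ∈ Finset.range (t+1)} ⨆ over all walks p of length k from u to v of ∏_{i=0}^{k-1} w (p i) (p (i+1)) (the empty product for k = 0 is 1, and the supremum over an empty set of walks is 0). -/

import Mathlib

/-! Both sides satisfy the same recursion: a walk of length `k + 1` from `u` to `v` is a walk of
length `k` from `u` to some `x`, followed by the edge `x → v`, and multiplication on `ℝ≥0∞`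
distributes over suprema. So the supremum over walks of length exactly `k` is the `k`-th
(max, ×) matrix power, and `maxProdBF w t` collects these powers for `k ≤ t`. -/

open ENNReal

/-- The (max, ×) generalized Bellman–Ford iterates for most reliable path:
`R 0 u v = if u = v then 1 else 0` and
`R (t+1) u v = max (⨆ x, R t u x * w x v) (R 0 u v)`. -/
noncomputable def maxProdBF {V : Type*} [Fintype V] [DecidableEq V]
    (w : Matrix V V ℝ≥0∞) : ℕ → V → V → ℝ≥0∞
  | 0 => fun u v => if u = v then 1 else 0
  | t + 1 => fun u v =>
      max (⨆ x : V, maxProdBF w t u x * w x v) (if u = v then 1 else 0)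

theorem Finset.biSup_range_succ' {α : Type*} [CompleteLattice α] (f : ℕ → α) (n : ℕ) :
    ⨆ k ∈ range (n + 1), f k = (⨆ k ∈ range n, f (k + 1)) ⊔ f 0 := by
  rw [range_add_one', iSup_insert, map_eq_image, iSup_finset_image, sup_comm]
  rfl

namespace Matrix

variable {V M : Type*}

def walkWeight [CommMonoid M] (w : Matrix V V M) {k : ℕ} (p : Fin (k + 1) → V) : M :=
  ∏ i : Fin k, w (p i.castSucc) (p i.succ)

theorem walkWeight_snoc [CommMonoid M] (w : Matrix V V M) {k : ℕ} (q : Fin (k + 1) → V) (x : V) :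
    w.walkWeight (Fin.snoc q x : Fin (k + 2) → V) = w.walkWeight q * w (q (Fin.last k)) x := by
  simp only [walkWeight, Fin.prod_univ_castSucc, Fin.succ_castSucc, Fin.snoc_castSucc,
    Fin.succ_last, Fin.snoc_last]

noncomputable def maxWalkWeight (w : Matrix V V ℝ≥0∞) (k : ℕ) (u v : V) : ℝ≥0∞ :=
  ⨆ p : {p : Fin (k + 1) → V // p 0 = u ∧ p (Fin.last k) = v}, w.walkWeight p.1

theorem maxWalkWeight_zero [DecidableEq V] (w : Matrix V V ℝ≥0∞) (u v : V) :
    w.maxWalkWeight 0 u v = if u = v then 1 else 0 := by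
  split_ifs with huv
  · subst huv
    refine le_antisymm (iSup_le fun _ => le_of_eq Finset.prod_empty) ?_
    exact le_iSup_of_le ⟨fun _ => u, rfl, rfl⟩ Finset.prod_empty.ge
  · have : IsEmpty {p : Fin 1 → V // p 0 = u ∧ p (Fin.last 0) = v} :=
      ⟨fun p => huv (p.2.1.symm.trans p.2.2)⟩
    exact iSup_of_empty _

theorem maxWalkWeight_succ (w : Matrix V V ℝ≥0∞) (k : ℕ) (u v : V) :
    w.maxWalkWeight (k + 1) u v = ⨆ x, w.maxWalkWeight k u x * w x v := by
  simp only [maxWalkWeight, ENNReal.iSup_mul]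
  apply le_antisymm
  · refine iSup_le fun ⟨p, hp0, hpv⟩ => ?_
    have hp : w.walkWeight p = w.walkWeight (Fin.init p) * w (Fin.init p (Fin.last k)) v := by
      rw [← hpv, ← walkWeight_snoc, Fin.snoc_init_self]
    exact le_iSup₂_of_le (Fin.init p (Fin.last k)) ⟨Fin.init p, hp0, rfl⟩ hp.le
  · refine iSup₂_le fun x ⟨q, hq0, hqx⟩ => ?_
    refine le_iSup_of_le ⟨Fin.snoc q v, ?_, Fin.snoc_last _ _⟩ ?_
    · exact (Fin.snoc_castSucc (α := fun _ => V) ..).trans hq0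
    · subst hqx
      exact (walkWeight_snoc w q _).ge

end Matrix

theorem maxProdBF_eq_sup_over_short_walks_general {V : Type*} [Fintype V] [DecidableEq V]
    (w : Matrix V V ℝ≥0∞) (t : ℕ) (u v : V) :
    maxProdBF w t u v =
      ⨆ k ∈ Finset.range (t + 1),
        ⨆ p : {p : Fin (k + 1) → V // p 0 = u ∧ p (Fin.last k) = v},
          ∏ i : Fin k, w (p.1 i.castSucc) (p.1 i.succ) := by
  change maxProdBF w t u v = ⨆ k ∈ Finset.range (t + 1), w.maxWalkWeight k u v
  induction t generalizing v with
  | zero => simp [maxProdBF, Matrix.maxWalkWeight_zero]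
  | succ t ih =>
    calc maxProdBF w (t + 1) u v
        = max (⨆ x, (⨆ k ∈ Finset.range (t + 1), w.maxWalkWeight k u x) * w x v)
            (w.maxWalkWeight 0 u v) := by simp only [maxProdBF, ih, Matrix.maxWalkWeight_zero]
      _ = (⨆ k ∈ Finset.range (t + 1), w.maxWalkWeight (k + 1) u v) ⊔ w.maxWalkWeight 0 u v := by
        simp only [ENNReal.iSup_mul, Matrix.maxWalkWeight_succ]
        rw [iSup_comm]
        simp only [iSup_comm (ι := V)]
      _ = _ := (Finset.biSup_range_succ' (fun k => w.maxWalkWeight k u v) (t + 1)).symm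

theorem maxProdBF_eq_sup_over_short_walks {V : Type*} [Fintype V] [DecidableEq V]
    (w : Matrix V V ℝ≥0∞) (hw : ∀ x y : V, w x y ≤ 1) (t : ℕ) (u v : V) :
    maxProdBF w t u v =
      ⨆ k ∈ Finset.range (t + 1),
        ⨆ p : {p : Fin (k + 1) → V // p 0 = u ∧ p (Fin.last k) = v},
          ∏ i : Fin k, w (p.1 i.castSucc) (p.1 i.succ) :=
  maxProdBF_eq_sup_over_short_walks_general w t u v
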